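/- arXiv:1608.05435 — 3 statements merged into one kernel-verified Lean document; each statement's English description precedes it below -/
import Mathlib

section
/- The asymptotic density of squarefree positive integers is 6/π², i.e., (1/n)·#{k ≤ n : k is squarefree} → 6/π² as n → ∞. -/
/-!
Writing `k = b² a` with `a` squarefree, the `d` with `d² ∣ k` are exactly the divisors of `b`,
so `∑_{d² ∣ k} μ d = [b = 1]` is the indicator of `k` being squarefree. Summing over `k ≤ n` and
swapping the sums gives `#{k ≤ n squarefree} = ∑_{d ≤ √n} μ d ⌊n / d²⌋`. Replacing `⌊n / d²⌋` by
`n / d²` costs at most `√n`, so the density is within `√n / n` of the partial sum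
`∑_{d ≤ √n} μ d / d²`, which tends to `1 / ζ 2 = 6 / π²`.
-/

open Filter Finset ArithmeticFunction Real Topology
open scoped ArithmeticFunction.Moebius ArithmeticFunction.zeta

theorem ArithmeticFunction.sum_divisors_moebius (n : ℕ) :
    ∑ d ∈ n.divisors, μ d = if n = 1 then 1 else 0 := by
  rw [← coe_zeta_mul_apply, coe_zeta_mul_moebius, one_apply]

theorem Nat.sq_dvd_sq_mul_iff_dvd {a b d : ℕ} (ha : Squarefree a) :
    d ^ 2 ∣ b ^ 2 * a ↔ d ∣ b := by
  refine ⟨fun h => ?_, fun h => (pow_dvd_pow_of_dvd h 2).mul_right a⟩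
  obtain ⟨d', b', hcop, hd, hb⟩ := Nat.exists_coprime d b
  rcases Nat.eq_zero_or_pos (d.gcd b) with hg | hg
  · rw [(Nat.gcd_eq_zero_iff.1 hg).2]
    exact dvd_zero d
  set g := d.gcd b
  have hd'a : d' ^ 2 ∣ a := by
    rw [hd, hb, mul_pow, mul_pow, mul_right_comm] at h
    exact (hcop.pow 2 2).dvd_of_dvd_mul_left (Nat.dvd_of_mul_dvd_mul_right (pow_pos hg 2) h)
  have hd'1 : d' = 1 := Nat.isUnit_iff.1 (ha d' (by rwa [← sq]))
  rw [hd, hd'1, one_mul]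
  exact Nat.gcd_dvd_right d b

theorem Nat.sum_divisors_filter_sq_dvd_moebius {k : ℕ} (hk : k ≠ 0) :
    ∑ d ∈ k.divisors with d ^ 2 ∣ k, μ d = if Squarefree k then 1 else 0 := by
  obtain ⟨a, b, -, hb, rfl, ha⟩ := Nat.sq_mul_squarefree_of_pos (Nat.pos_of_ne_zero hk)
  have hdiv : {d ∈ (b ^ 2 * a).divisors | d ^ 2 ∣ b ^ 2 * a} = b.divisors := by
    ext d
    simp only [mem_filter, Nat.mem_divisors, Nat.sq_dvd_sq_mul_iff_dvd ha]
    exact ⟨fun h => ⟨h.2, hb.ne'⟩,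
      fun h => ⟨⟨h.1.trans ((dvd_pow_self b two_ne_zero).mul_right a), hk⟩, h.1⟩⟩
  rw [hdiv, sum_divisors_moebius]
  congr 1
  refine propext ⟨fun hb1 => by simpa [hb1] using ha, fun hsq => Nat.isUnit_iff.1 (hsq b ?_)⟩
  exact Dvd.intro a (by ring)

theorem Nat.card_filter_squarefree_Icc_eq_sum_moebius (n : ℕ) :
    (#{k ∈ Icc 1 n | Squarefree k} : ℤ) = ∑ d ∈ Icc 1 n.sqrt, μ d * (n / d ^ 2 : ℕ) := by
  calc (#{k ∈ Icc 1 n | Squarefree k} : ℤ)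
      = ∑ k ∈ Icc 1 n, ∑ d ∈ k.divisors with d ^ 2 ∣ k, μ d := by
        rw [card_filter]
        push_cast
        refine sum_congr rfl fun k hk => (sum_divisors_filter_sq_dvd_moebius ?_).symm
        exact (Nat.one_le_iff_ne_zero.1 (mem_Icc.1 hk).1)
    _ = ∑ d ∈ Icc 1 n.sqrt, ∑ k ∈ Icc 1 n with d ^ 2 ∣ k, μ d := by
        refine sum_comm' fun k d => ?_
        simp only [mem_filter, mem_Icc, Nat.mem_divisors, Nat.le_sqrt']
        constructor
        · rintro ⟨hk, ⟨hdk, hk0⟩, hd2k⟩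
          exact ⟨⟨hk, hd2k⟩, Nat.pos_of_dvd_of_pos hdk (by omega),
            (Nat.le_of_dvd (by omega) hd2k).trans hk.2⟩
        · rintro ⟨⟨hk, hd2k⟩, -⟩
          exact ⟨hk, ⟨(dvd_pow_self d two_ne_zero).trans hd2k, by omega⟩, hd2k⟩
    _ = ∑ d ∈ Icc 1 n.sqrt, μ d * (n / d ^ 2 : ℕ) := by
        refine sum_congr rfl fun d _ => ?_
        rw [sum_const, show Icc 1 n = Ioc 0 n from rfl, Nat.Ioc_filter_dvd_card_eq_div,
          nsmul_eq_mul, mul_comm]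

theorem LSeriesHasSum_moebius {s : ℂ} (hs : 1 < s.re) :
    LSeriesHasSum (fun n => (μ n : ℂ)) s (riemannZeta s)⁻¹ := by
  convert (LSeriesSummable_moebius_iff.mpr hs).LSeriesHasSum
  rw [← LSeries_zeta_eq_riemannZeta hs]
  exact (eq_inv_of_mul_eq_one_right (LSeries_zeta_mul_Lseries_moebius hs)).symm

theorem hasSum_moebius_div_sq : HasSum (fun d : ℕ => (μ d : ℝ) / d ^ 2) (6 / π ^ 2) := by
  have hs : 1 < (2 : ℂ).re := by norm_num
  have h := LSeriesHasSum_moebius hs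
  rw [LSeriesHasSum, riemannZeta_two, inv_div] at h
  rw [← Complex.hasSum_ofReal]
  convert h using 1
  · ext d
    rcases eq_or_ne d 0 with rfl | hd
    · simp
    · rw [LSeries.term_of_ne_zero hd, Complex.cpow_ofNat]
      norm_num
  · norm_num

theorem abs_natCast_div_sub_div_le_one (n m : ℕ) : |((n / m : ℕ) : ℝ) - n / m| ≤ 1 := by
  rw [← Nat.floor_div_eq_div (K := ℝ), abs_sub_comm,
    abs_of_nonneg (sub_nonneg.2 (Nat.floor_le (by positivity)))]
  linarith [Nat.lt_floor_add_one ((n : ℝ) / m)]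

theorem abs_card_filter_squarefree_div_sub_le (n : ℕ) :
    |(#{k ∈ Icc 1 n | Squarefree k} : ℝ) / n - ∑ d ∈ Icc 1 n.sqrt, (μ d : ℝ) / d ^ 2|
      ≤ n.sqrt / n := by
  rcases eq_or_ne n 0 with rfl | hn
  · simp
  have hcount : (#{k ∈ Icc 1 n | Squarefree k} : ℝ)
      = ∑ d ∈ Icc 1 n.sqrt, (μ d : ℝ) * (n / d ^ 2 : ℕ) := by
    have h := congrArg ((↑) : ℤ → ℝ) (Nat.card_filter_squarefree_Icc_eq_sum_moebius n)
    push_cast at h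
    exact h
  have hdiff : (#{k ∈ Icc 1 n | Squarefree k} : ℝ) / n - ∑ d ∈ Icc 1 n.sqrt, (μ d : ℝ) / d ^ 2
      = (∑ d ∈ Icc 1 n.sqrt, (μ d : ℝ) * (((n / d ^ 2 : ℕ) : ℝ) - (n : ℝ) / (d ^ 2 : ℕ))) / n := by
    rw [hcount, sum_div, sum_div, ← sum_sub_distrib]
    refine sum_congr rfl fun d _ => ?_
    field_simp
    push_cast
    ring
  rw [hdiff, abs_div, Nat.abs_cast]
  gcongr
  calc |∑ d ∈ Icc 1 n.sqrt, (μ d : ℝ) * (((n / d ^ 2 : ℕ) : ℝ) - (n : ℝ) / (d ^ 2 : ℕ))|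
      ≤ ∑ d ∈ Icc 1 n.sqrt, (1 : ℝ) := by
        refine (abs_sum_le_sum_abs _ _).trans (sum_le_sum fun d _ => ?_)
        rw [abs_mul]
        exact mul_le_one₀ (by exact_mod_cast abs_moebius_le_one) (abs_nonneg _)
          (abs_natCast_div_sub_div_le_one _ _)
    _ = n.sqrt := by simp

theorem Nat.tendsto_sqrt_atTop : Tendsto Nat.sqrt atTop atTop :=
  tendsto_atTop_atTop_of_monotone (fun _ _ => Nat.sqrt_le_sqrt)
    fun b => ⟨b * b, (Nat.sqrt_eq b).ge⟩

theorem tendsto_sum_Icc_sqrt_moebius_div_sq :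
    Tendsto (fun n : ℕ => ∑ d ∈ Icc 1 n.sqrt, (μ d : ℝ) / d ^ 2) atTop (𝓝 (6 / π ^ 2)) := by
  refine (hasSum_moebius_div_sq.tendsto_sum_nat.comp
    ((tendsto_add_atTop_nat 1).comp Nat.tendsto_sqrt_atTop)).congr fun n => ?_
  rw [Function.comp_apply, Function.comp_apply, range_eq_Ico, sum_eq_sum_Ico_succ_bot (by omega)]
  simp [Ico_add_one_right_eq_Icc]

theorem tendsto_nat_sqrt_div_self : Tendsto (fun n : ℕ => (n.sqrt : ℝ) / n) atTop (𝓝 0) := by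
  have h : Tendsto (fun n : ℕ => 1 / √(n : ℝ)) atTop (𝓝 0) := by
    simpa only [Function.comp_def, one_div] using
      tendsto_inv_atTop_zero.comp (tendsto_sqrt_atTop.comp tendsto_natCast_atTop_atTop)
  refine squeeze_zero (fun n => by positivity) (fun n => ?_) h
  rw [← sqrt_div_self']
  gcongr
  exact nat_sqrt_le_real_sqrt

theorem squarefree_density :
    Tendsto (fun n : ℕ =>
      (((Finset.Icc 1 n).filter Squarefree).card : ℝ) / (n : ℝ))
      atTop (nhds (6 / Real.pi ^ 2)) := by
  have herr := squeeze_zero_norm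
    (fun n => (norm_eq_abs _).trans_le (abs_card_filter_squarefree_div_sub_le n))
    tendsto_nat_sqrt_div_self
  simpa using herr.add tendsto_sum_Icc_sqrt_moebius_div_sq
end

section
/- For every integer r ≥ 2, the probability that r uniformly random integers from {1,...,n} have gcd 1 tends to 1/ζ(r) as n → ∞, i.e., (1/n^r)·#{(k₁,...,k_r) ∈ {1,...,n}^r : gcd(k₁,...,k_r) = 1} → 1/ζ(r). -/
open Filter Finset ArithmeticFunction
open scoped Topology ArithmeticFunction.Moebius

/-! Möbius inversion counts the gcd-one tuples in `[1, n]^r` exactly as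
`∑_{d ≤ n} μ(d) ⌊n/d⌋^r`. Divided by `n^r`, the `d`-th term tends to `μ(d)/d^r` and is dominated
by `1/d^r`, which is summable for `r ≥ 2`; so the proportion tends to `∑ μ(d)/d^r`, and this is
`1/ζ(r)` because the Dirichlet series of `μ` and of `1` are mutually inverse. -/

variable {R : Type*}

lemma sum_divisors_moebius_eq_ite [Ring R] (m : ℕ) :
    ∑ d ∈ m.divisors, (μ d : R) = if m = 1 then 1 else 0 := by
  simp_rw [← intCoe_apply (R := R)]
  rw [← coe_mul_zeta_apply, coe_moebius_mul_coe_zeta, one_apply]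

lemma filter_Icc_dvd_eq_divisors {m n : ℕ} (hm : m ≠ 0) (hmn : m ≤ n) :
    {d ∈ Icc 1 n | d ∣ m} = m.divisors := by
  ext d
  simp only [mem_filter, mem_Icc, Nat.mem_divisors]
  constructor
  · rintro ⟨-, hd⟩
    exact ⟨hd, hm⟩
  · rintro ⟨hd, -⟩
    have hm' := Nat.pos_of_ne_zero hm
    exact ⟨⟨Nat.pos_of_dvd_of_pos hd hm', (Nat.le_of_dvd hm' hd).trans hmn⟩, hd⟩

section Tuples

variable {ι : Type*} [Fintype ι] [DecidableEq ι]

lemma card_filter_dvd_gcd_piFinset_Icc (n d : ℕ) :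
    #{f ∈ Fintype.piFinset (fun _ : ι => Icc 1 n) | d ∣ univ.gcd f} = (n / d) ^ Fintype.card ι := by
  have : {f ∈ Fintype.piFinset (fun _ : ι => Icc 1 n) | d ∣ univ.gcd f}
      = Fintype.piFinset (fun _ : ι => {x ∈ Icc 1 n | d ∣ x}) := by
    ext f
    simp only [mem_filter, Fintype.mem_piFinset, Finset.dvd_gcd_iff, mem_univ, true_imp_iff,
      forall_and]
  rw [this, Fintype.card_piFinset, prod_const, card_univ, ← Nat.Ioc_filter_dvd_card_eq_div,
    ← Icc_add_one_left_eq_Ioc, zero_add]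

lemma ite_gcd_eq_one_eq_sum_moebius [Ring R] [Nonempty ι] {n : ℕ} {f : ι → ℕ}
    (hf : f ∈ Fintype.piFinset (fun _ : ι => Icc 1 n)) :
    (if univ.gcd f = 1 then 1 else 0 : R) = ∑ d ∈ Icc 1 n with d ∣ univ.gcd f, (μ d : R) := by
  obtain ⟨i⟩ := ‹Nonempty ι›
  have hfi : f i ∈ Icc 1 n := Fintype.mem_piFinset.mp hf i
  rw [mem_Icc] at hfi
  have hgcd : univ.gcd f ∣ f i := gcd_dvd (mem_univ i)
  have hpos : 0 < univ.gcd f := Nat.pos_of_dvd_of_pos hgcd hfi.1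
  rw [filter_Icc_dvd_eq_divisors hpos.ne' ((Nat.le_of_dvd hfi.1 hgcd).trans hfi.2),
    sum_divisors_moebius_eq_ite]

theorem card_filter_gcd_eq_one_piFinset_Icc [CommRing R] [Nonempty ι] (n : ℕ) :
    (#{f ∈ Fintype.piFinset (fun _ : ι => Icc 1 n) | univ.gcd f = 1} : R)
      = ∑ d ∈ Icc 1 n, (μ d : R) * ((n / d : ℕ) : R) ^ Fintype.card ι := by
  set P := Fintype.piFinset (fun _ : ι => Icc 1 n)
  calc (#{f ∈ P | univ.gcd f = 1} : R)
      = ∑ f ∈ P, ∑ d ∈ Icc 1 n with d ∣ univ.gcd f, (μ d : R) := by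
        rw [card_filter, Nat.cast_sum]
        refine sum_congr rfl fun f hf => ?_
        rw [← ite_gcd_eq_one_eq_sum_moebius hf, Nat.cast_ite, Nat.cast_one, Nat.cast_zero]
    _ = ∑ d ∈ Icc 1 n, ∑ f ∈ P with d ∣ univ.gcd f, (μ d : R) := by
        simp only [sum_filter]; exact sum_comm
    _ = ∑ d ∈ Icc 1 n, (μ d : R) * ((n / d : ℕ) : R) ^ Fintype.card ι := by
        refine sum_congr rfl fun d _ => ?_
        rw [sum_const, card_filter_dvd_gcd_piFinset_Icc, nsmul_eq_mul, Nat.cast_pow, mul_comm]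

end Tuples

lemma natCast_div_div_le_one_div (n d : ℕ) : ((n / d : ℕ) : ℝ) / n ≤ 1 / d := by
  rcases eq_or_ne n 0 with rfl | hn
  · simp
  calc ((n / d : ℕ) : ℝ) / n ≤ (n / d : ℝ) / n := by gcongr; exact Nat.cast_div_le
    _ = 1 / d := by field_simp

lemma tendsto_natCast_div_div_atTop (d : ℕ) :
    Tendsto (fun n : ℕ => ((n / d : ℕ) : ℝ) / n) atTop (𝓝 (1 / d)) := by
  rcases eq_or_ne d 0 with rfl | hd
  · simp
  have hfloor : Tendsto (fun n : ℕ => (⌊(n : ℝ) / d⌋₊ : ℝ) / (n / d) * (1 / d)) atTop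
      (𝓝 (1 / d)) := by
    simpa using (tendsto_nat_floor_div_atTop.comp
      (tendsto_natCast_atTop_atTop.atTop_div_const (by positivity))).mul_const (1 / (d : ℝ))
  refine hfloor.congr' ?_
  filter_upwards [eventually_ne_atTop 0] with n hn
  rw [Nat.floor_div_eq_div]
  field_simp

lemma LSeries_ofReal_natCast_eq_ofReal_tsum (f : ℕ → ℝ) {k : ℕ} (hk : k ≠ 0) :
    LSeries (fun n => (f n : ℂ)) k = ((∑' n : ℕ, f n / (n : ℝ) ^ k : ℝ) : ℂ) := by
  rw [Complex.ofReal_tsum, LSeries]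
  refine tsum_congr fun n => ?_
  rw [LSeries.term_of_ne_zero' (by exact_mod_cast hk), Complex.cpow_natCast]
  rw [Complex.ofReal_div, Complex.ofReal_pow, Complex.ofReal_natCast]

lemma tsum_moebius_div_pow_eq_inv {k : ℕ} (hk : 1 < k) :
    ∑' n : ℕ, (μ n : ℝ) / (n : ℝ) ^ k = (∑' n : ℕ, 1 / (n : ℝ) ^ k)⁻¹ := by
  have h := LSeries_one_mul_Lseries_moebius (s := k) (by simpa using hk)
  have hμ := LSeries_ofReal_natCast_eq_ofReal_tsum (fun n => (μ n : ℝ)) (k := k) (by omega)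
  have h1 := LSeries_ofReal_natCast_eq_ofReal_tsum (fun _ => (1 : ℝ)) (k := k) (by omega)
  simp only [Complex.ofReal_intCast, Complex.ofReal_one] at hμ h1
  rw [show (1 : ℕ → ℂ) = fun _ => 1 from rfl, h1, hμ, ← Complex.ofReal_mul,
    Complex.ofReal_eq_one] at h
  exact eq_inv_of_mul_eq_one_right h

lemma card_coprime_tuples_div_pow_eq_tsum {r : ℕ} (hr : r ≠ 0) (n : ℕ) :
    (#{f ∈ Fintype.piFinset (fun _ : Fin r => Icc 1 n) | univ.gcd f = 1} : ℝ) / (n : ℝ) ^ r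
      = ∑' d : ℕ, (μ d : ℝ) * (((n / d : ℕ) : ℝ) / n) ^ r := by
  have : NeZero r := ⟨hr⟩
  rw [card_filter_gcd_eq_one_piFinset_Icc, Fintype.card_fin, sum_div, tsum_eq_sum (s := Icc 1 n)]
  · exact sum_congr rfl fun d _ => by rw [div_pow, mul_div_assoc]
  · -- the terms vanish at `d = 0` because `μ 0 = 0`, and for `d > n` because `n / d = 0`
    intro d hd
    rcases eq_or_ne d 0 with rfl | hd0
    · simp
    · rw [Nat.div_eq_of_lt (by simp at hd; omega)]
      simp [hr]

lemma tendsto_tsum_moebius_mul_div_pow {r : ℕ} (hr : 1 < r) :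
    Tendsto (fun n : ℕ => ∑' d : ℕ, (μ d : ℝ) * (((n / d : ℕ) : ℝ) / n) ^ r) atTop
      (𝓝 (∑' d : ℕ, (μ d : ℝ) / (d : ℝ) ^ r)) := by
  have hbound (n d : ℕ) : ‖(μ d : ℝ) * (((n / d : ℕ) : ℝ) / n) ^ r‖ ≤ 1 / (d : ℝ) ^ r := by
    rw [norm_mul, norm_pow, ← one_mul (1 / _), ← one_div_pow]
    gcongr
    · rw [Real.norm_eq_abs]
      exact_mod_cast abs_moebius_le_one
    · rw [Real.norm_of_nonneg (by positivity)]
      exact natCast_div_div_le_one_div n d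
  refine tendsto_tsum_of_dominated_convergence (Real.summable_one_div_nat_pow.mpr hr)
    (fun d => ?_) (Eventually.of_forall hbound)
  simpa [div_eq_mul_one_div (μ d : ℝ), one_div_pow] using
    ((tendsto_natCast_div_div_atTop d).pow r).const_mul (μ d : ℝ)

theorem coprime_tuples_probability (r : ℕ) (hr : 2 ≤ r) :
    Tendsto (fun n : ℕ =>
      (((Fintype.piFinset (fun _ : Fin r => Finset.Icc 1 n)).filter
          (fun f : Fin r → ℕ => Finset.univ.gcd f = 1)).card : ℝ) / (n : ℝ) ^ r)
      atTop (nhds (1 / ∑' j : ℕ+, (1 : ℝ) / (j : ℝ) ^ r)) := by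
  rw [tsum_pnat_eq_tsum_of_eq_zero (f := fun n : ℕ => 1 / (n : ℝ) ^ r) (by simp; omega),
    one_div (tsum _), ← tsum_moebius_div_pow_eq_inv hr]
  simpa only [card_coprime_tuples_div_pow_eq_tsum (by omega : r ≠ 0)]
    using tendsto_tsum_moebius_mul_div_pow hr
end

section
/- The sum of the totient function satisfies ∑_{k=1}^{n} φ(k) = (3/π²)n² + O(n log n). -/
/-!
Möbius inversion gives `φ = μ * id`, so `∑_{k ≤ N} φ k = ∑_{d ≤ N} μ d · T ⌊N/d⌋` with
`T m = m (m + 1) / 2`. Replacing `T ⌊N/d⌋` by `(N/d)² / 2` costs `O(N/d)` per term, hence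
`O(N log N)` in total, and completing `∑_{d ≤ N} μ d / d²` to `∑ μ d / d² = 1 / ζ 2 = 6 / π²`
costs `N² · O(1/N)`.
-/

open Finset Filter Topology Real ArithmeticFunction
open scoped ArithmeticFunction.Moebius

theorem Nat.sum_moebius_mul_eq_totient {R : Type*} [NonAssocRing R] {n : ℕ} (hn : 0 < n) :
    ∑ x ∈ n.divisorsAntidiagonal, (μ x.1 : R) * x.2 = n.totient :=
  sum_eq_iff_sum_mul_moebius_eq (f := fun m ↦ (m.totient : R)) (g := fun m ↦ (m : R)) |>.mp
    (fun m _ ↦ by rw [← Nat.cast_sum, Nat.sum_totient]) n hn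

theorem sum_Ioc_totient_eq {R : Type*} [CommRing R] (N : ℕ) :
    ∑ n ∈ Ioc 0 N, (n.totient : R) = ∑ d ∈ Ioc 0 N, (μ d : R) * ∑ m ∈ Ioc 0 (N / d), (m : R) := by
  have h : ∀ n ∈ Ioc 0 N, (n.totient : R) =
      ((μ : ArithmeticFunction R) * (ArithmeticFunction.id : ArithmeticFunction R)) n := by
    intro n hn
    rw [← Nat.sum_moebius_mul_eq_totient (mem_Ioc.mp hn).1, mul_apply]
    simp
  rw [sum_congr rfl h, sum_Ioc_mul_eq_sum_sum]
  simp

theorem two_mul_sum_Ioc_natCast {R : Type*} [CommSemiring R] (m : ℕ) :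
    2 * ∑ i ∈ Ioc 0 m, (i : R) = m * (m + 1) := by
  induction m with
  | zero => simp
  | succ m ih =>
    rw [sum_Ioc_succ_top m.zero_le, mul_add, ih]
    push_cast; ring

theorem abs_floor_mul_floor_add_one_sub_sq_le {K : Type*} [Field K] [LinearOrder K]
    [IsStrictOrderedRing K] [FloorSemiring K] {x : K} (hx : 0 ≤ x) :
    |(⌊x⌋₊ : K) * (⌊x⌋₊ + 1) - x ^ 2| ≤ x + 1 := by
  have h₁ := Nat.floor_le hx
  have h₂ := Nat.lt_floor_add_one x
  rw [abs_le]
  constructor <;> nlinarith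

theorem abs_sum_moebius_mul_sub_sq_le (N : ℕ) :
    |∑ d ∈ Ioc 0 N, (μ d : ℝ) * (2 * ∑ m ∈ Ioc 0 (N / d), (m : ℝ) - ((N : ℝ) / d) ^ 2)|
      ≤ 2 * N * (1 + Real.log N) := by
  calc _ ≤ ∑ d ∈ Ioc 0 N, |(μ d : ℝ) * (2 * ∑ m ∈ Ioc 0 (N / d), (m : ℝ) - ((N : ℝ) / d) ^ 2)| :=
        abs_sum_le_sum_abs _ _
    _ ≤ ∑ d ∈ Ioc 0 N, 2 * N * (d : ℝ)⁻¹ := by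
        refine sum_le_sum fun d hd ↦ ?_
        obtain ⟨hd, hdN⟩ := mem_Ioc.mp hd
        have hx : 1 ≤ (N : ℝ) / d := by
          rw [one_le_div (by positivity)]; exact_mod_cast hdN
        rw [two_mul_sum_Ioc_natCast, abs_mul, ← Nat.floor_div_eq_div (K := ℝ)]
        calc _ ≤ 1 * ((N : ℝ) / d + 1) :=
              mul_le_mul (mod_cast abs_moebius_le_one)
                (abs_floor_mul_floor_add_one_sub_sq_le (by linarith)) (abs_nonneg _) zero_le_one
          _ ≤ 2 * N * (d : ℝ)⁻¹ := by rw [div_eq_mul_inv] at hx ⊢; linarith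
    _ = 2 * N * ∑ d ∈ Icc 1 N, (d : ℝ)⁻¹ := by rw [mul_sum]; rfl
    _ ≤ 2 * N * (1 + Real.log N) := by
        gcongr
        simpa [harmonic_eq_sum_Icc] using harmonic_le_one_add_log N

theorem abs_sum_Ioc_sub_tsum_le {f : ℕ → ℝ} (hf : ∀ n, |f n| ≤ ((n : ℝ) ^ 2)⁻¹) {N : ℕ}
    (hN : N ≠ 0) : |∑ n ∈ Ioc 0 N, f n - ∑' n, f n| ≤ (N : ℝ)⁻¹ := by
  have hs : Summable f := Summable.of_norm_bounded (Real.summable_nat_pow_inv.mpr one_lt_two) hf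
  have hf0 : f 0 = 0 := by simpa using hf 0
  have hlim : Tendsto (fun M ↦ ∑ n ∈ Ioc 0 M, f n) atTop (𝓝 (∑' n, f n)) := by
    refine (hs.hasSum.tendsto_sum_nat.comp (tendsto_add_atTop_nat 1)).congr fun M ↦ ?_
    rw [Function.comp_apply, Nat.range_succ_eq_Icc_zero, Icc_eq_cons_Ioc M.zero_le, sum_cons, hf0,
      zero_add]
  refine le_of_tendsto (tendsto_const_nhds.sub hlim).abs ?_
  filter_upwards [eventually_ge_atTop N] with M hM
  rw [← sum_Ioc_consecutive _ N.zero_le hM, sub_add_cancel_left, abs_neg]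
  calc _ ≤ ∑ n ∈ Ioc N M, |f n| := abs_sum_le_sum_abs _ _
    _ ≤ ∑ n ∈ Ioc N M, ((n : ℝ) ^ 2)⁻¹ := sum_le_sum fun n _ ↦ hf n
    _ ≤ (N : ℝ)⁻¹ - (M : ℝ)⁻¹ := sum_Ioc_inv_sq_le_sub hN hM
    _ ≤ (N : ℝ)⁻¹ := sub_le_self _ (by positivity)

theorem abs_moebius_div_sq_le (n : ℕ) : |(μ n : ℝ) / n ^ 2| ≤ ((n : ℝ) ^ 2)⁻¹ := by
  rw [abs_div, abs_of_nonneg (by positivity : (0 : ℝ) ≤ n ^ 2), div_eq_mul_inv]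
  exact mul_le_of_le_one_left (by positivity) (mod_cast abs_moebius_le_one)

theorem tsum_moebius_div_sq : ∑' n : ℕ, (μ n : ℝ) / n ^ 2 = 6 / π ^ 2 := by
  have h2 : 1 < (2 : ℂ).re := by norm_num
  have hL : LSeries (fun n ↦ (μ n : ℂ)) 2 = 6 / (π : ℂ) ^ 2 := by
    have h := LSeries_zeta_mul_Lseries_moebius h2
    rw [LSeries_zeta_eq_riemannZeta h2, riemannZeta_two] at h
    have : (π : ℂ) ≠ 0 := by exact_mod_cast pi_ne_zero
    field_simp at h ⊢
    linear_combination h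
  have hterm : ∀ n : ℕ, (((μ n : ℝ) / n ^ 2 : ℝ) : ℂ) = LSeries.term (fun n ↦ (μ n : ℂ)) 2 n := by
    intro n
    rcases eq_or_ne n 0 with rfl | hn
    · simp
    · rw [LSeries.term_of_ne_zero hn]
      norm_num [Complex.cpow_natCast]
  apply Complex.ofReal_injective
  rw [Complex.ofReal_tsum, tsum_congr hterm]
  change LSeries _ 2 = _
  rw [hL]
  push_cast; ring

theorem totient_sum_error :
    ∃ C : ℝ, ∀ n : ℕ, 2 ≤ n →
      |((∑ k ∈ Finset.Icc 1 n, Nat.totient k : ℕ) : ℝ) - (3 / Real.pi ^ 2) * (n : ℝ) ^ 2|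
        ≤ C * n * Real.log n := by
  refine ⟨4, fun N hN ↦ ?_⟩
  set E := ∑ d ∈ Ioc 0 N, (μ d : ℝ) * (2 * ∑ m ∈ Ioc 0 (N / d), (m : ℝ) - ((N : ℝ) / d) ^ 2)
  set P := ∑ d ∈ Ioc 0 N, (μ d : ℝ) / d ^ 2
  have hdecomp : 2 * (((∑ k ∈ Icc 1 N, k.totient : ℕ) : ℝ) - 3 / π ^ 2 * N ^ 2)
      = E + N ^ 2 * (P - ∑' d : ℕ, (μ d : ℝ) / d ^ 2) := by
    rw [tsum_moebius_div_sq, Nat.cast_sum, show Icc 1 N = Ioc 0 N from Icc_add_one_left_eq_Ioc 0 N,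
      sum_Ioc_totient_eq]
    simp only [E, P, mul_sub, sum_sub_distrib, mul_sum]
    ring_nf
  have hE := abs_sum_moebius_mul_sub_sq_le N
  have hP := abs_sum_Ioc_sub_tsum_le abs_moebius_div_sq_le (show N ≠ 0 by omega)
  have hlog : 1 / 2 < Real.log N := by
    have := Real.log_two_gt_d9
    have := Real.log_le_log two_pos (show (2 : ℝ) ≤ N by exact_mod_cast hN)
    linarith
  have hN₀ : (0 : ℝ) < N := by positivity
  have hPN : |N ^ 2 * (P - ∑' d : ℕ, (μ d : ℝ) / d ^ 2)| ≤ N := by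
    rw [abs_mul, abs_of_pos (by positivity)]
    calc _ ≤ (N : ℝ) ^ 2 * (N : ℝ)⁻¹ := by gcongr
      _ = N := by field_simp
  have htotal :=
    (abs_add_le E (N ^ 2 * (P - ∑' d : ℕ, (μ d : ℝ) / d ^ 2))).trans (add_le_add hE hPN)
  rw [← hdecomp, abs_mul, abs_two] at htotal
  nlinarith
end
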